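/- Assume that for every (x*,y*,α) ∈ W one has (f+δ_B)^c(x*,y*,α) = min_{λ∈ℝ^{(T)}_+} min_{(u*,v*,γ)∈W} { f^c(u*,v*,γ) + (λh)^c(x*−u*, y*−v*, α−γ) } with both minima attained. Then for all x̄ ∈ B ∩ dom f and all ε ≥ 0, ∂_{c,ε}(f+δ_B)(x̄) = ∪_{λ∈ℝ^{(T)}_+} ∪_{ε₁,ε₂ ≥ 0, ε₁+ε₂ = ε + (eco λh)(x̄)} { ∂_{c,ε₁} f(x̄) + ∂_{c,ε₂}(eco λh)(x̄) }. -/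

import Mathlib

open scoped Pointwise

noncomputable section

variable {X : Type*} [AddCommGroup X] [Module ℝ X] [TopologicalSpace X]

/-- `Wsp X` is the parameter space `X* × X* × ℝ` used in the `c`-conjugation scheme. -/
abbrev Wsp (X : Type*) [AddCommGroup X] [Module ℝ X] [TopologicalSpace X] :=
  (X →L[ℝ] ℝ) × (X →L[ℝ] ℝ) × ℝ

/-- The coupling function `c(x,(x*,y*,α)) = ⟨x,x*⟩` if `⟨x,y*⟩ < α`, `+∞` otherwise. -/
def coupling (x : X) (w : Wsp X) : EReal :=
  if w.2.1 x < w.2.2 then ((w.1 x : ℝ) : EReal) else ⊤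

/-- The `c`-conjugate of `f : X → ℝ∪{±∞}`.  (EReal subtraction gives priority to `-∞`.) -/
def cConj (f : X → EReal) : Wsp X → EReal :=
  fun w => ⨆ x : X, coupling x w - f x

/-- The `c'`-conjugate of `k : W → ℝ∪{±∞}`. -/
def cConj' (k : Wsp X → EReal) : X → EReal :=
  fun x => ⨆ w : Wsp X, coupling x w - k w

/-- Epigraph of an extended-real-valued function, as a subset of `Y × ℝ`. -/
def epiE {Y : Type*} (f : Y → EReal) : Set (Y × ℝ) :=
  {p | f p.1 ≤ (p.2 : EReal)}

/-- A set `C` is evenly convex (e-convex) if every point outside `C` can be strictly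
separated from `C` by a continuous linear functional. -/
def EConvexSet {Y : Type*} [AddCommGroup Y] [Module ℝ Y] [TopologicalSpace Y]
    (C : Set Y) : Prop :=
  ∀ x₀ ∉ C, ∃ φ : Y →L[ℝ] ℝ, ∀ x ∈ C, φ x < φ x₀

/-- A function is e-convex if its epigraph is an e-convex subset of `X × ℝ`. -/
def EConvexFn (f : X → EReal) : Prop := EConvexSet (epiE f)

/-- The e-convex hull of a function: its largest e-convex minorant. -/
def eco (f : X → EReal) : X → EReal :=
  fun x => ⨆ g : {g : X → EReal // EConvexFn g ∧ g ≤ f}, g.1 x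

/-- A function `k : W → ℝ∪{±∞}` is e'-convex if it is the pointwise supremum of a family
of functions of the form `w ↦ c(x,w) - β` with `x ∈ X`, `β ∈ ℝ`. -/
def E'ConvexFn (k : Wsp X → EReal) : Prop :=
  ∃ S : Set (X × ℝ), k = fun w => ⨆ p ∈ S, (coupling p.1 w - ((p.2 : ℝ) : EReal))

/-- The e'-convex hull of a function: its largest e'-convex minorant. -/
def e'co (k : Wsp X → EReal) : Wsp X → EReal :=
  fun w => ⨆ g : {g : Wsp X → EReal // E'ConvexFn g ∧ g ≤ k}, g.1 w

/-- A subset of `W × ℝ` is e'-convex if it is the epigraph of an e'-convex function. -/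
def E'ConvexSet (D : Set (Wsp X × ℝ)) : Prop :=
  ∃ k : Wsp X → EReal, E'ConvexFn k ∧ D = epiE k

/-- The e'-convex hull of a set: the smallest e'-convex set containing it. -/
def e'coSet (D : Set (Wsp X × ℝ)) : Set (Wsp X × ℝ) :=
  ⋂₀ {E : Set (Wsp X × ℝ) | E'ConvexSet E ∧ D ⊆ E}

/-- A function is proper if it never takes the value `-∞` and is not identically `+∞`. -/
def ProperFn {Y : Type*} (f : Y → EReal) : Prop :=
  (∀ x, f x ≠ ⊥) ∧ ∃ x, f x ≠ ⊤

/-- Convexity of an extended-real-valued function, via convexity of its epigraph. -/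
def ConvexFn (f : X → EReal) : Prop := Convex ℝ (epiE f)

open Classical in
/-- Indicator function: `0` on `D`, `+∞` elsewhere. -/
def indicatorE {Y : Type*} (D : Set Y) : Y → EReal :=
  fun x => if x ∈ D then 0 else ⊤

/-- The `ε`-`c`-subdifferential of `f` at `xb`; empty if `f xb ∉ ℝ`. -/
def cSubdiff (f : X → EReal) (ε : ℝ) (xb : X) : Set (Wsp X) :=
  {w | (∃ r : ℝ, f xb = (r : EReal)) ∧ w.2.1 xb < w.2.2 ∧
    ∀ x : X, coupling x w - coupling xb w - (ε : EReal) ≤ f x - f xb}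

/-- The e-affine function with parameters `(x', y', α, β)`. -/
def eAffine (x' y' : X →L[ℝ] ℝ) (α β : ℝ) : X → EReal :=
  fun x => if y' x < α then ((x' x - β : ℝ) : EReal) else ⊤

/-- A function is e-affine if it equals `eAffine x' y' α β` for some parameters. -/
def IsEAffine (a : X → EReal) : Prop :=
  ∃ x' y' α β, a = eAffine x' y' α β

/-- The set `Ẽ_{f₁,f₂}` of e-affine functions obtained by adding the parameters of an
e-affine minorant of `f₁` and one of `f₂`. -/
def ETilde (f₁ f₂ : X → EReal) : Set (X → EReal) :=
  {a | ∃ x₁ y₁ : X →L[ℝ] ℝ, ∃ α₁ β₁ : ℝ, ∃ x₂ y₂ : X →L[ℝ] ℝ, ∃ α₂ β₂ : ℝ,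
    eAffine x₁ y₁ α₁ β₁ ≤ f₁ ∧ eAffine x₂ y₂ α₂ β₂ ≤ f₂ ∧
    a = eAffine (x₁ + x₂) (y₁ + y₂) (α₁ + α₂) (β₁ + β₂)}

/-- The additivity condition (AC): `eco (f₁ + f₂) = sup {a : a ∈ Ẽ_{f₁,f₂}}`. -/
def ACcond (f₁ f₂ : X → EReal) : Prop :=
  eco (fun x => f₁ x + f₂ x) = fun x => ⨆ a ∈ ETilde f₁ f₂, a x

/-- Infimal convolution of two functions on `W`. -/
def infConv (k₁ k₂ : Wsp X → EReal) : Wsp X → EReal :=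
  fun w => ⨅ w' : Wsp X, k₁ w' + k₂ (w - w')

/-- The DC objective `f - g`, defined to be `+∞` outside `dom f`. -/
def dcDiff (f g : X → EReal) : X → EReal :=
  fun x => if f x = ⊤ then ⊤ else f x - g x

/-- `λh := Σ_{t∈T} λ_t h_t` for a nonnegative generalized finite sequence `λ`. -/
def lamh {T : Type*} (lam : T →₀ ℝ) (h : T → X → EReal) : X → EReal :=
  fun x => ∑ t ∈ lam.support, ((lam t : ℝ) : EReal) * h t x

/-- The set `B := ∩_{λ∈ℝ^{(T)}_+} {x : (eco λh)(x) ≤ 0}`. -/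
def Bset {T : Type*} (h : T → X → EReal) : Set X :=
  {x | ∀ lam : T →₀ ℝ, (∀ t, 0 ≤ lam t) → eco (lamh lam h) x ≤ 0}

/-- The set `K := ∪_{λ∈ℝ^{(T)}_+} epi (λh)^c`. -/
def Kset {T : Type*} (h : T → X → EReal) : Set (Wsp X × ℝ) :=
  ⋃ lam ∈ {l : T →₀ ℝ | ∀ t, 0 ≤ l t}, epiE (cConj (lamh lam h))

/-! Fix `x̄ ∈ B ∩ dom f` and put `F := f + δ_B`. For finite `f(x̄)`, `w ∈ ∂_{c,ε} f(x̄)` says exactly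
that `⟨x̄, y*⟩ < α` and the Fenchel–Young inequality `c(x̄, w) - f(x̄) ≤ f^c(w)` is tight up to `ε`.
If `w ∈ ∂_{c,ε} F(x̄)` and `F^c(w) = f^c(w') + (λh)^c(w - w')`, both conjugate values are therefore
finite. Since `c(·, w - w') - (λh)^c(w - w')` is an e-affine minorant of `λh`, it lies below
`eco λh`, so `(eco λh)^c(w - w') ≤ (λh)^c(w - w')`; evaluating at `x̄` and using `(eco λh)(x̄) ≤ 0`
shows `(eco λh)(x̄)` is finite, and the slack `ε` splits as `ε₁ + ε₂ = ε + (eco λh)(x̄)` between the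
two Fenchel–Young inequalities for `f` at `w'` and `eco λh` at `w - w'`. Conversely, adding those two
inequalities and using `F^c(w₁ + w₂) ≤ f^c(w₁) + (λh)^c(w₂) ≤ f^c(w₁) + (eco λh)^c(w₂)` gives
`w₁ + w₂ ∈ ∂_{c,ε} F(x̄)`. -/

namespace EReal

lemma sub_coe_le_sub_coe_iff (a b : EReal) (c d : ℝ) :
    a - c ≤ b - d ↔ a - b ≤ ((c - d : ℝ) : EReal) := by
  induction a <;> induction b <;> norm_num [← EReal.coe_sub]
  constructor <;> intro <;> linarith

lemma sub_coe_le_iff (a b : EReal) (c : ℝ) : a - c ≤ b ↔ a - b ≤ c := by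
  simpa using sub_coe_le_sub_coe_iff a b c 0

lemma sub_coe_sub_coe (a : EReal) (c e : ℝ) : a - c - e = a - ((c + e : ℝ) : EReal) := by
  induction a <;> simp [← EReal.coe_sub, -EReal.coe_add, sub_sub]

lemma exists_coe_of_coe_le_add_le_coe {x y : EReal} {c d : ℝ} (hc : (c : EReal) ≤ x + y)
    (hd : x + y ≤ d) : ∃ a b : ℝ, x = a ∧ y = b := by
  induction x <;> induction y <;> simp_all

end EReal

section Coupling

variable {x : X} {w : Wsp X}

lemma coupling_of_lt (hw : w.2.1 x < w.2.2) : coupling x w = w.1 x := if_pos hw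

lemma coupling_of_not_lt (hw : ¬ w.2.1 x < w.2.2) : coupling x w = ⊤ := if_neg hw

lemma lt_of_coupling_sub_le_coe {β γ : ℝ} (h : coupling x w - β ≤ γ) : w.2.1 x < w.2.2 := by
  by_contra hw
  simp [coupling_of_not_lt hw] at h

lemma eAffine_eq_coupling_sub (w : Wsp X) (β : ℝ) :
    eAffine w.1 w.2.1 w.2.2 β = fun x => coupling x w - β := by
  ext x
  unfold eAffine coupling
  split_ifs <;> simp [← EReal.coe_sub]

end Coupling

lemma eConvexFn_eAffine (x' y' : X →L[ℝ] ℝ) (α β : ℝ) : EConvexFn (eAffine x' y' α β) := by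
  have hepi : ∀ p : X × ℝ, p ∈ epiE (eAffine x' y' α β) ↔ y' p.1 < α ∧ x' p.1 - β ≤ p.2 := by
    intro p
    simp only [epiE, eAffine, Set.mem_ofPred_eq]
    split_ifs with hp
    · rw [EReal.coe_le_coe_iff]; simp [hp]
    · simp [hp]
  -- A point above the strict half-space `{y' < α}` is separated by `y'`, one inside it by the
  -- functional `(x, t) ↦ x' x - t` defining the graph.
  intro p₀ hp₀
  by_cases hy : y' p₀.1 < α
  · have hx : p₀.2 < x' p₀.1 - β := by
      by_contra! hx
      exact hp₀ ((hepi p₀).2 ⟨hy, hx⟩)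
    refine ⟨x'.comp (ContinuousLinearMap.fst ℝ X ℝ) - ContinuousLinearMap.snd ℝ X ℝ, fun p hp => ?_⟩
    have := ((hepi p).1 hp).2
    simp only [sub_apply, ContinuousLinearMap.coe_comp, Function.comp_apply,
      ContinuousLinearMap.coe_fst', ContinuousLinearMap.coe_snd']
    linarith
  · refine ⟨y'.comp (ContinuousLinearMap.fst ℝ X ℝ), fun p hp => ?_⟩
    have := ((hepi p).1 hp).1
    simp only [ContinuousLinearMap.coe_comp, Function.comp_apply, ContinuousLinearMap.coe_fst']
    linarith

lemma eco_le (g : X → EReal) : eco g ≤ g := fun _ => iSup_le fun g' => g'.2.2 _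

lemma le_eco_of_eConvexFn {g a : X → EReal} (ha : EConvexFn a) (hle : a ≤ g) : a ≤ eco g :=
  fun x => le_iSup (fun g' : {g' : X → EReal // EConvexFn g' ∧ g' ≤ g} => g'.1 x) ⟨a, ha, hle⟩

lemma coupling_sub_le_cConj (g : X → EReal) (x : X) (w : Wsp X) :
    coupling x w - g x ≤ cConj g w :=
  le_iSup (fun x => coupling x w - g x) x

section Conjugate

variable {g k : X → EReal} {w : Wsp X}

lemma cConj_antitone (hgk : g ≤ k) : cConj k ≤ cConj g :=
  fun _ => iSup_mono fun x => EReal.sub_le_sub le_rfl (hgk x)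

lemma cConj_le_coe_iff {β : ℝ} : cConj g w ≤ β ↔ ∀ x, coupling x w - β ≤ g x := by
  simp only [cConj, iSup_le_iff, EReal.sub_coe_le_iff]

lemma cConj_eco_le_coe {β : ℝ} (h : cConj g w ≤ β) : cConj (eco g) w ≤ β := by
  have haff : eAffine w.1 w.2.1 w.2.2 β ≤ g := by
    rw [eAffine_eq_coupling_sub]
    exact cConj_le_coe_iff.1 h
  have := le_eco_of_eConvexFn (eConvexFn_eAffine _ _ _ _) haff
  rw [eAffine_eq_coupling_sub] at this
  exact cConj_le_coe_iff.2 this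

end Conjugate

lemma mem_cSubdiff_iff {f : X → EReal} {ε : ℝ} {xb : X} {r : ℝ} (hr : f xb = r) {w : Wsp X} :
    w ∈ cSubdiff f ε xb ↔ w.2.1 xb < w.2.2 ∧ cConj f w ≤ ((w.1 xb - r + ε : ℝ) : EReal) := by
  simp only [cSubdiff, Set.mem_ofPred_eq, hr, exists_apply_eq_apply', true_and]
  refine and_congr_right fun hw => ?_
  simp only [coupling_of_lt hw, EReal.sub_coe_sub_coe, EReal.sub_coe_le_sub_coe_iff, cConj,
    iSup_le_iff]
  ring_nf

section SubdiffSplitting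

variable {F f k : X → EReal} {xb : X} {r ε : ℝ}

lemma exists_mem_cSubdiff_of_cConj_eq_add (hF : F xb = r) (hf : f xb = r) (hk : eco k xb ≤ 0)
    {w w' : Wsp X} (hsplit : cConj F w = cConj f w' + cConj k (w - w'))
    (hw : w ∈ cSubdiff F ε xb) :
    ∃ ε₁ ε₂ : ℝ, 0 ≤ ε₁ ∧ 0 ≤ ε₂ ∧ (ε₁ : EReal) + ε₂ = ε + eco k xb ∧
      w' ∈ cSubdiff f ε₁ xb ∧ w - w' ∈ cSubdiff (eco k) ε₂ xb := by
  set u := w - w'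
  obtain ⟨hlt, hFw⟩ := (mem_cSubdiff_iff hF).1 hw
  have hFY : ((w.1 xb - r : ℝ) : EReal) ≤ cConj F w := by
    simpa [coupling_of_lt hlt, hF, ← EReal.coe_sub] using coupling_sub_le_cConj F xb w
  rw [hsplit] at hFY hFw
  obtain ⟨a, b, ha, hb⟩ := EReal.exists_coe_of_coe_le_add_le_coe hFY hFw
  rw [ha, hb, ← EReal.coe_add, EReal.coe_le_coe_iff] at hFY hFw
  have hfw' : coupling xb w' - r ≤ a := by
    simpa [hf, ha] using coupling_sub_le_cConj f xb w'
  have hlt' := lt_of_coupling_sub_le_coe hfw'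
  rw [coupling_of_lt hlt', ← EReal.coe_sub, EReal.coe_le_coe_iff] at hfw'
  have hku : cConj (eco k) u ≤ b := cConj_eco_le_coe hb.le
  have hkxb := cConj_le_coe_iff.1 hku xb
  have hltu := lt_of_coupling_sub_le_coe (hkxb.trans hk)
  rw [coupling_of_lt hltu, ← EReal.coe_sub] at hkxb
  obtain ⟨m, hm⟩ : ∃ m : ℝ, eco k xb = m :=
    ⟨_, (EReal.coe_toReal (hk.trans_lt EReal.zero_lt_top).ne
      (ne_bot_of_le_ne_bot (EReal.coe_ne_bot _) hkxb)).symm⟩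
  rw [hm, EReal.coe_le_coe_iff] at hkxb
  rw [hm, EReal.coe_nonpos] at hk
  have hu : u.1 xb = w.1 xb - w'.1 xb := rfl
  refine ⟨ε + u.1 xb - b, b + m - u.1 xb, by linarith, by linarith, ?_,
    (mem_cSubdiff_iff hf).2 ⟨hlt', ?_⟩, (mem_cSubdiff_iff hm).2 ⟨hltu, ?_⟩⟩
  · rw [hm, ← EReal.coe_add, ← EReal.coe_add]; congr 1; ring
  · rw [ha, EReal.coe_le_coe_iff]; linarith
  · exact hku.trans_eq (by congr 1; ring)

lemma add_mem_cSubdiff_of_cConj_le (hF : F xb = r) (hf : f xb = r) {ε₁ ε₂ : ℝ}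
    (hsum : (ε₁ : EReal) + ε₂ = ε + eco k xb) {w₁ w₂ : Wsp X}
    (hw₁ : w₁ ∈ cSubdiff f ε₁ xb) (hw₂ : w₂ ∈ cSubdiff (eco k) ε₂ xb)
    (hle : cConj F (w₁ + w₂) ≤ cConj f w₁ + cConj k w₂) :
    w₁ + w₂ ∈ cSubdiff F ε xb := by
  obtain ⟨m, hm⟩ := hw₂.1
  rw [hm, ← EReal.coe_add, ← EReal.coe_add, EReal.coe_eq_coe_iff] at hsum
  obtain ⟨hlt₁, hf₁⟩ := (mem_cSubdiff_iff hf).1 hw₁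
  obtain ⟨hlt₂, hk₂⟩ := (mem_cSubdiff_iff hm).1 hw₂
  refine (mem_cSubdiff_iff hF).2 ⟨add_lt_add hlt₁ hlt₂, ?_⟩
  calc cConj F (w₁ + w₂) ≤ cConj f w₁ + cConj (eco k) w₂ :=
        hle.trans (add_le_add le_rfl (cConj_antitone (eco_le k) w₂))
    _ ≤ ((w₁.1 xb - r + ε₁ : ℝ) : EReal) + ((w₂.1 xb - m + ε₂ : ℝ) : EReal) := add_le_add hf₁ hk₂
    _ = (((w₁ + w₂).1 xb - r + ε : ℝ) : EReal) := by
        rw [← EReal.coe_add]; congr 1; simp only [Prod.fst_add, add_apply]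
        linarith

end SubdiffSplitting

theorem stmt12_general {T : Type*}
    (f : X → EReal) (h : T → X → EReal)
    (hfp : ProperFn f)
    (hII : (∀ w : Wsp X,
      (∃ lam : T →₀ ℝ, (∀ t, 0 ≤ lam t) ∧ ∃ w' : Wsp X,
        cConj (fun x => f x + indicatorE (Bset h) x) w
          = cConj f w' + cConj (lamh lam h) (w - w')) ∧
      (∀ lam : T →₀ ℝ, (∀ t, 0 ≤ lam t) → ∀ w' : Wsp X,
        cConj (fun x => f x + indicatorE (Bset h) x) w
          ≤ cConj f w' + cConj (lamh lam h) (w - w')))) :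
    (∀ xb : X, xb ∈ Bset h → f xb ≠ ⊤ → ∀ ε : ℝ, 0 ≤ ε →
      cSubdiff (fun x => f x + indicatorE (Bset h) x) ε xb =
        ⋃ lam ∈ {l : T →₀ ℝ | ∀ t, 0 ≤ l t},
          ⋃ ε₁ ∈ {e : ℝ | 0 ≤ e}, ⋃ ε₂ ∈ {e : ℝ | 0 ≤ e},
            ⋃ (_ : (ε₁ : EReal) + (ε₂ : EReal) = (ε : EReal) + eco (lamh lam h) xb),
              (cSubdiff f ε₁ xb + cSubdiff (eco (lamh lam h)) ε₂ xb)) := by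
  intro xb hxb hfxb ε _
  obtain ⟨r, hr⟩ : ∃ r : ℝ, f xb = r := ⟨_, (EReal.coe_toReal hfxb (hfp.1 xb)).symm⟩
  set F := fun x => f x + indicatorE (Bset h) x
  have hFr : F xb = r := by simp [F, indicatorE, hxb, hr]
  ext w
  simp only [Set.mem_iUnion, Set.mem_ofPred_eq, exists_prop]
  constructor
  · intro hw
    obtain ⟨⟨lam, hlam, w', hsplit⟩, -⟩ := hII w
    obtain ⟨ε₁, ε₂, hε₁, hε₂, hsum, hw₁, hw₂⟩ :=
      exists_mem_cSubdiff_of_cConj_eq_add hFr hr (hxb lam hlam) hsplit hw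
    exact ⟨lam, hlam, ε₁, hε₁, ε₂, hε₂, hsum, w', hw₁, w - w', hw₂, add_sub_cancel w' w⟩
  · rintro ⟨lam, hlam, ε₁, -, ε₂, -, hsum, w₁, hw₁, w₂, hw₂, rfl⟩
    refine add_mem_cSubdiff_of_cConj_le hFr hr hsum hw₁ hw₂ ?_
    simpa only [add_sub_cancel_left] using (hII (w₁ + w₂)).2 lam hlam w₁

/-- the min formula (ii) implies the subdifferential formula (iii). -/
theorem stmt12 [IsTopologicalAddGroup X] [ContinuousSMul ℝ X] [LocallyConvexSpace ℝ X] [T2Space X] {T : Type*}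
    (f : X → EReal) (h : T → X → EReal)
    (hfp : ProperFn f) (hfc : ConvexFn f)
    (hhp : ∀ t, ProperFn (h t)) (hhc : ∀ t, ConvexFn (h t))
    (hII : (∀ w : Wsp X,
      (∃ lam : T →₀ ℝ, (∀ t, 0 ≤ lam t) ∧ ∃ w' : Wsp X,
        cConj (fun x => f x + indicatorE (Bset h) x) w
          = cConj f w' + cConj (lamh lam h) (w - w')) ∧
      (∀ lam : T →₀ ℝ, (∀ t, 0 ≤ lam t) → ∀ w' : Wsp X,
        cConj (fun x => f x + indicatorE (Bset h) x) w
          ≤ cConj f w' + cConj (lamh lam h) (w - w')))) :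
    (∀ xb : X, xb ∈ Bset h → f xb ≠ ⊤ → ∀ ε : ℝ, 0 ≤ ε →
      cSubdiff (fun x => f x + indicatorE (Bset h) x) ε xb =
        ⋃ lam ∈ {l : T →₀ ℝ | ∀ t, 0 ≤ l t},
          ⋃ ε₁ ∈ {e : ℝ | 0 ≤ e}, ⋃ ε₂ ∈ {e : ℝ | 0 ≤ e},
            ⋃ (_ : (ε₁ : EReal) + (ε₂ : EReal) = (ε : EReal) + eco (lamh lam h) xb),
              (cSubdiff f ε₁ xb + cSubdiff (eco (lamh lam h)) ε₂ xb)) :=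
  stmt12_general f h hfp hII

end
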